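/- For every x ∈ ℝ^n, G ∈ ℝ^n and ρ > 0: φ_ρ(x; G) ≥ ρ·θ(x) − ‖G‖. In particular, if θ(x) > 0 and ξ ∈ (0,1), then φ_ρ(x; G) ≥ ρ·ξ·θ(x) whenever ρ ≥ ‖G‖ / ((1 − ξ)·θ(x)). -/

import Mathlib

/-! If `s₀` minimizes `‖c(x) + J(x)s‖` over the unit ball, then the minimum defining `φ_ρ` is at
most `⟪G, s₀⟫ + ρ‖c(x) + J(x)s₀‖ ≤ ‖G‖ + ρ(‖c(x)‖ - θ(x))`. The second
claim is then arithmetic: `ρ(1 - ξ)θ(x) ≥ ‖G‖`. -/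

open scoped RealInnerProductSpace

/-- The criticality measure θ(x) = ‖c(x)‖ − min_{‖s‖≤1} ‖c(x) + J(x)s‖. -/
noncomputable def thetaMeasure {n q : ℕ}
    (c : EuclideanSpace ℝ (Fin n) → EuclideanSpace ℝ (Fin q))
    (J : EuclideanSpace ℝ (Fin n) → EuclideanSpace ℝ (Fin n) →L[ℝ] EuclideanSpace ℝ (Fin q))
    (x : EuclideanSpace ℝ (Fin n)) : ℝ :=
  ‖c x‖ - sInf ((fun s => ‖c x + J x s‖) '' Metric.closedBall 0 1)

/-- φ_ρ(x; G) = ρ‖c(x)‖ − min_{‖s‖≤1} (⟨G, s⟩ + ρ‖c(x) + J(x)s‖). -/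
noncomputable def phiMeasure {n q : ℕ}
    (c : EuclideanSpace ℝ (Fin n) → EuclideanSpace ℝ (Fin q))
    (J : EuclideanSpace ℝ (Fin n) → EuclideanSpace ℝ (Fin n) →L[ℝ] EuclideanSpace ℝ (Fin q))
    (x G : EuclideanSpace ℝ (Fin n)) (ρ : ℝ) : ℝ :=
  ρ * ‖c x‖ - sInf ((fun s => ⟪G, s⟫ + ρ * ‖c x + J x s‖) '' Metric.closedBall 0 1)

theorem IsCompact.sInf_image_add_mul_le {α : Type*} [TopologicalSpace α] {S : Set α}
    (hS : IsCompact S) (hne : S.Nonempty) {f g : α → ℝ} (hf : ContinuousOn f S)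
    (hg : ContinuousOn g S) {M : ℝ} (hgM : ∀ s ∈ S, g s ≤ M) (ρ : ℝ) :
    sInf ((fun s => g s + ρ * f s) '' S) ≤ M + ρ * sInf (f '' S) := by
  obtain ⟨s₀, hs₀, hmin⟩ := hS.exists_isMinOn hne hf
  have hf_min : sInf (f '' S) = f s₀ := IsLeast.csInf_eq ⟨Set.mem_image_of_mem f hs₀, Set.forall_mem_image.2 hmin⟩
  have hbdd : BddBelow ((fun s => g s + ρ * f s) '' S) :=
    (hS.image_of_continuousOn (hg.add (continuousOn_const.mul hf))).bddBelow
  calc sInf ((fun s => g s + ρ * f s) '' S) ≤ g s₀ + ρ * f s₀ := csInf_le hbdd ⟨s₀, hs₀, rfl⟩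
    _ ≤ M + ρ * sInf (f '' S) := by rw [hf_min]; linarith [hgM s₀ hs₀]

theorem inner_le_norm_of_mem_closedBall {E : Type*} [NormedAddCommGroup E]
    [InnerProductSpace ℝ E] (G : E) {s : E} (hs : s ∈ Metric.closedBall 0 1) :
    ⟪G, s⟫ ≤ ‖G‖ := by
  have hs1 : ‖s‖ ≤ 1 := by simpa using hs
  calc ⟪G, s⟫ ≤ ‖G‖ * ‖s‖ := real_inner_le_norm G s
    _ ≤ ‖G‖ := mul_le_of_le_one_right (norm_nonneg G) hs1

theorem phiMeasure_ge_mul_thetaMeasure_sub_norm {n q : ℕ}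
    (c : EuclideanSpace ℝ (Fin n) → EuclideanSpace ℝ (Fin q))
    (J : EuclideanSpace ℝ (Fin n) → EuclideanSpace ℝ (Fin n) →L[ℝ] EuclideanSpace ℝ (Fin q))
    (x G : EuclideanSpace ℝ (Fin n)) (ρ : ℝ) :
    phiMeasure c J x G ρ ≥ ρ * thetaMeasure c J x - ‖G‖ := by
  have h := (isCompact_closedBall (0 : EuclideanSpace ℝ (Fin n)) 1).sInf_image_add_mul_le
    ⟨0, Metric.mem_closedBall_self zero_le_one⟩ (f := fun s => ‖c x + J x s‖)
    (g := fun s => ⟪G, s⟫) (by fun_prop) (by fun_prop)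
    (fun s hs => inner_le_norm_of_mem_closedBall G hs) ρ
  unfold phiMeasure thetaMeasure
  linarith

theorem stmt_10 {n q : ℕ}
    (c : EuclideanSpace ℝ (Fin n) → EuclideanSpace ℝ (Fin q))
    (J : EuclideanSpace ℝ (Fin n) → EuclideanSpace ℝ (Fin n) →L[ℝ] EuclideanSpace ℝ (Fin q))
    (x G : EuclideanSpace ℝ (Fin n)) (ρ : ℝ) :
    phiMeasure c J x G ρ ≥ ρ * thetaMeasure c J x - ‖G‖ ∧
      ∀ ξ : ℝ, ξ ∈ Set.Ioo (0 : ℝ) 1 → 0 < thetaMeasure c J x →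
        ρ ≥ ‖G‖ / ((1 - ξ) * thetaMeasure c J x) →
        phiMeasure c J x G ρ ≥ ρ * ξ * thetaMeasure c J x := by
  have key := phiMeasure_ge_mul_thetaMeasure_sub_norm c J x G ρ
  refine ⟨key, fun ξ ⟨_, hξ1⟩ hθ hρ => ?_⟩
  have hden : 0 < (1 - ξ) * thetaMeasure c J x := mul_pos (by linarith) hθ
  rw [ge_iff_le, div_le_iff₀ hden] at hρ
  linarith
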